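/- For any integer m ≥ 2, the Perron–Frobenius operator identity holds: for every f integrable with respect to γ_m and every Borel set A ⊆ [0,1], ∫_{T_m^{−1}(A)} f dγ_m = ∫_A ∑_{i∈ℕ} P_i((m−1)y) f(m^{−i}/(1+(m−1)y)) dγ_m(y). -/

import Mathlib

open MeasureTheory

/-- The Chan shift transformation `T_m`. -/
noncomputable def chanT (m : ℕ) (x : ℝ) : ℝ :=
  if x = 0 then 0
  else ((m:ℝ) ^ (Int.fract (Real.log (1/x) / Real.log m)) - 1) / ((m:ℝ) - 1)

/-- The weights `P_i(x)`. -/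
noncomputable def chanP (m : ℕ) (i : ℕ) (x : ℝ) : ℝ :=
  ((m:ℝ) - 1) * (m:ℝ)^(-((i:ℤ)+1)) * (x + 1) * (x + m) /
    ((x + ((m:ℝ) - 1) * (m:ℝ)^(-(i:ℤ)) + 1) * (x + ((m:ℝ) - 1) * (m:ℝ)^(-((i:ℤ)+1)) + 1))

/-- The invariant measure `γ_m` of `T_m`. -/
noncomputable def chanGamma (m : ℕ) : Measure ℝ :=
  (volume.restrict (Set.Icc (0:ℝ) 1)).withDensity fun x =>
    ENNReal.ofReal ((((m:ℝ) - 1)^2 / Real.log ((m:ℝ)^2 / (2*(m:ℝ) - 1))) /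
      ((1 + ((m:ℝ) - 1) * x) * ((m:ℝ) + ((m:ℝ) - 1) * x)))

/-!
On the `i`-th branch `(m^{-i-1}, m^{-i}]`, where `⌊log_m (1/x)⌋ = i`, the map `T_m` is
`x ↦ (m^{-i}/x - 1)/(m - 1)`, whose inverse `φ_i y = m^{-i}/(1 + (m-1)y)` maps `[0,1)` onto the
branch. The density `ρ` of `γ_m` satisfies `|φ_i'(y)| ρ(φ_i y) = ρ(y) P_i((m-1)y)`, so changing
variables on each branch and summing over `i` gives the identity. Summation and integration may be
exchanged because the same computation for `|f|` shows that the branch integrals of `|f|` add up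
to `∫ |f| dγ_m < ∞`.
-/

open Set Function

section InverseBranches

variable {E : Type*} [NormedAddCommGroup E] [NormedSpace ℝ E]

theorem integral_iUnion_image_eq_integral_tsum {s : Set ℝ} (hs : MeasurableSet s)
    {φ φ' : ℕ → ℝ → ℝ} (hφ' : ∀ i, ∀ y ∈ s, HasDerivWithinAt (φ i) (φ' i y) s y)
    (hφ : ∀ i, InjOn (φ i) s) (hdisj : Pairwise (Disjoint on fun i => φ i '' s))
    {g : ℝ → E} (hg : IntegrableOn g (⋃ i, φ i '' s)) :
    ∫ x in ⋃ i, φ i '' s, g x = ∫ y in s, ∑' i, |φ' i y| • g (φ i y) := by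
  have himage : ∀ i, MeasurableSet (φ i '' s) := fun i =>
    measurable_image_of_fderivWithin hs (fun y hy => (hφ' i y hy).hasFDerivWithinAt) (hφ i)
  rw [integral_iUnion himage hdisj hg, integral_tsum]
  · exact tsum_congr fun i => integral_image_eq_integral_abs_deriv_smul hs (hφ' i) (hφ i) g
  · exact fun i => ((integrableOn_image_iff_integrableOn_abs_deriv_smul hs (hφ' i) (hφ i) g).1
      (hg.mono_set (subset_iUnion (fun i => φ i '' s) i))).aestronglyMeasurable
  · calc ∑' i, ∫⁻ y in s, ‖|φ' i y| • g (φ i y)‖ₑ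
        = ∑' i, ∫⁻ x in φ i '' s, ‖g x‖ₑ := by
          refine tsum_congr fun i => ?_
          rw [lintegral_image_eq_lintegral_abs_deriv_mul hs (hφ' i) (hφ i)]
          simp only [enorm_smul, Real.enorm_eq_ofReal_abs, abs_abs]
      _ = ∫⁻ x in ⋃ i, φ i '' s, ‖g x‖ₑ := (lintegral_iUnion himage hdisj _).symm
      _ ≠ ⊤ := hg.hasFiniteIntegral.ne

end InverseBranches

section FractionalLinear

theorem strictAntiOn_div_one_add_mul {a r : ℝ} (ha : 0 < a) (hr : 0 < r) :
    StrictAntiOn (fun y => a / (1 + r * y)) (Ici 0) := fun y (hy : 0 ≤ y) z _ hyz => by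
  have : 0 ≤ r * y := mul_nonneg hr.le hy
  exact div_lt_div_of_pos_left ha (by positivity) (by gcongr)

theorem image_div_one_add_mul_Ico {a r : ℝ} (ha : 0 < a) (hr : 0 < r) :
    (fun y => a / (1 + r * y)) '' Ico 0 1 = Ioc (a / (1 + r)) a := by
  ext x
  constructor
  · rintro ⟨y, ⟨hy0, hy1⟩, rfl⟩
    have : 0 ≤ r * y := mul_nonneg hr.le hy0
    have : r * y < r := by simpa using mul_lt_mul_of_pos_left hy1 hr
    exact ⟨div_lt_div_of_pos_left ha (by positivity) (by linarith), div_le_self ha.le (by linarith)⟩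
  · rintro ⟨hx1, hx2⟩
    have hx0 : 0 < x := lt_trans (by positivity) hx1
    refine ⟨(a / x - 1) / r, ⟨?_, ?_⟩, ?_⟩
    · exact div_nonneg (by rw [sub_nonneg, one_le_div hx0]; exact hx2) hr.le
    · rw [div_lt_one hr, sub_lt_iff_lt_add', div_lt_iff₀ hx0]
      rwa [div_lt_iff₀ (by positivity), mul_comm] at hx1
    · show a / (1 + r * ((a / x - 1) / r)) = x
      rw [mul_div_cancel₀ _ hr.ne', add_sub_cancel, div_div_cancel₀ ha.ne']

theorem hasDerivAt_div_one_add_mul (a r : ℝ) {y : ℝ} (hy : 1 + r * y ≠ 0) :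
    HasDerivAt (fun y => a / (1 + r * y)) (-(a * r) / (1 + r * y) ^ 2) y := by
  have h := (hasDerivAt_const y a).fun_div (((hasDerivAt_id y).const_mul r).const_add 1) hy
  exact h.congr_deriv (by simp only [id]; ring)

end FractionalLinear

noncomputable def chanDensity (m : ℕ) (x : ℝ) : ℝ :=
  (((m:ℝ) - 1)^2 / Real.log ((m:ℝ)^2 / (2*(m:ℝ) - 1))) /
    ((1 + ((m:ℝ) - 1) * x) * ((m:ℝ) + ((m:ℝ) - 1) * x))

noncomputable def chanBranch (m i : ℕ) : Set ℝ :=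
  Ioc ((m:ℝ) ^ (-(i:ℤ)) / m) ((m:ℝ) ^ (-(i:ℤ)))

noncomputable def chanInvBranch (m i : ℕ) (y : ℝ) : ℝ :=
  (m:ℝ) ^ (-(i:ℤ)) / (1 + ((m:ℝ) - 1) * y)

noncomputable def chanInvBranchDeriv (m i : ℕ) (y : ℝ) : ℝ :=
  -((m:ℝ) ^ (-(i:ℤ)) * ((m:ℝ) - 1)) / (1 + ((m:ℝ) - 1) * y) ^ 2

section Chan

variable {m : ℕ}

theorem chanDensity_nonneg {x : ℝ} (hx : 0 ≤ x) : 0 ≤ chanDensity m x := by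
  rcases Nat.eq_zero_or_pos m with rfl | hm0
  -- the normalising constant is `1 / log 0 = 0`
  · simp [chanDensity]
  have hm : (1:ℝ) ≤ m := by exact_mod_cast hm0
  have hlog : 0 ≤ Real.log ((m:ℝ)^2 / (2*(m:ℝ) - 1)) :=
    Real.log_nonneg ((one_le_div (by linarith)).2 (by nlinarith))
  have hmx : 0 ≤ ((m:ℝ) - 1) * x := mul_nonneg (by linarith) hx
  unfold chanDensity
  exact div_nonneg (div_nonneg (sq_nonneg _) hlog) (mul_nonneg (by linarith) (by linarith))

theorem measurable_chanDensity : Measurable (chanDensity m) := by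
  unfold chanDensity
  fun_prop

theorem chanGamma_eq_withDensity :
    chanGamma m =
      (volume.restrict (Icc 0 1)).withDensity fun x => ENNReal.ofReal (chanDensity m x) :=
  rfl

theorem setIntegral_chanGamma (S : Set ℝ) (g : ℝ → ℝ) :
    ∫ x in S, g x ∂chanGamma m = ∫ x in S ∩ Icc 0 1, chanDensity m x * g x := by
  rw [chanGamma_eq_withDensity, setIntegral_withDensity_eq_setIntegral_toReal_smul' S
    measurable_chanDensity.ennreal_ofReal (ae_of_all _ fun _ => ENNReal.ofReal_lt_top),
    Measure.restrict_restrict' measurableSet_Icc]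
  refine integral_congr_ae ?_
  filter_upwards [ae_restrict_of_ae_restrict_of_subset inter_subset_right
    (ae_restrict_mem measurableSet_Icc)] with x hx
  rw [ENNReal.toReal_ofReal (chanDensity_nonneg hx.1), smul_eq_mul]

theorem integrableOn_chanDensity_mul {g : ℝ → ℝ} (hg : Integrable g (chanGamma m)) :
    IntegrableOn (fun x => chanDensity m x * g x) (Icc 0 1) := by
  rw [chanGamma_eq_withDensity, integrable_withDensity_iff_integrable_smul'
    measurable_chanDensity.ennreal_ofReal (ae_of_all _ fun _ => ENNReal.ofReal_lt_top)] at hg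
  refine IntegrableOn.congr_fun hg (fun x hx => ?_) measurableSet_Icc
  rw [ENNReal.toReal_ofReal (chanDensity_nonneg hx.1), smul_eq_mul]

variable (hm : 1 < m)
include hm

theorem mem_chanBranch_iff (i : ℕ) {x : ℝ} : x ∈ chanBranch m i ↔ 0 < x ∧ Int.log m x⁻¹ = i := by
  have hm0 : (0:ℝ) < m := by positivity
  by_cases hx : 0 < x
  · have hlow : (m:ℝ) ^ (-(i:ℤ)) / m = ((m:ℝ) ^ ((i:ℤ) + 1))⁻¹ := by
      rw [zpow_add_one₀ hm0.ne', mul_inv, zpow_neg, div_eq_mul_inv]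
    rw [chanBranch, mem_Ioc, hlow, zpow_neg, inv_lt_comm₀ (by positivity) hx,
      le_inv_comm₀ hx (by positivity), Int.lt_zpow_iff_log_lt hm (inv_pos.2 hx),
      Int.zpow_le_iff_le_log hm (inv_pos.2 hx)]
    simp only [hx, true_and]
    omega
  · exact iff_of_false (fun h => hx (lt_trans (by positivity) h.1)) (fun h => hx h.1)

theorem pairwise_disjoint_chanBranch : Pairwise (Disjoint on chanBranch m) := fun i j hij =>
  disjoint_left.2 fun x hi hj => hij <| by
    have := ((mem_chanBranch_iff hm i).1 hi).2
    have := ((mem_chanBranch_iff hm j).1 hj).2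
    omega

theorem iUnion_chanBranch : ⋃ i, chanBranch m i = Ioc 0 1 := by
  ext x
  simp only [mem_iUnion, mem_chanBranch_iff hm, mem_Ioc]
  refine ⟨fun ⟨i, hx, hi⟩ => ⟨hx, ?_⟩, fun ⟨hx, hx1⟩ => ⟨(Int.log m x⁻¹).toNat, hx, ?_⟩⟩
  · have : (0:ℤ) ≤ Int.log m x⁻¹ := by omega
    rwa [← Int.zpow_le_iff_le_log hm (inv_pos.2 hx), zpow_zero, one_le_inv₀ hx] at this
  · have : (0:ℤ) ≤ Int.log m x⁻¹ := by
      rwa [← Int.zpow_le_iff_le_log hm (inv_pos.2 hx), zpow_zero, one_le_inv₀ hx]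
    omega

theorem chanT_of_mem_chanBranch {i : ℕ} {x : ℝ} (hx : x ∈ chanBranch m i) :
    chanT m x = ((m:ℝ) ^ (-(i:ℤ)) / x - 1) / ((m:ℝ) - 1) := by
  obtain ⟨hx0, hlog⟩ := (mem_chanBranch_iff hm i).1 hx
  have hm1 : (1:ℝ) < m := Nat.one_lt_cast.2 hm
  rw [chanT, if_neg hx0.ne', one_div, Real.log_div_log, Int.fract, Real.floor_logb_natCast
    (inv_pos.2 hx0).le, hlog, Real.rpow_sub (by positivity), Real.rpow_logb (by positivity)
    hm1.ne' (inv_pos.2 hx0), Int.cast_natCast, Real.rpow_natCast, zpow_neg, zpow_natCast]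
  ring

theorem image_chanInvBranch_Ico (i : ℕ) : chanInvBranch m i '' Ico 0 1 = chanBranch m i := by
  have hm1 : (1:ℝ) < m := Nat.one_lt_cast.2 hm
  have h := image_div_one_add_mul_Ico (zpow_pos (by positivity : (0:ℝ) < m) (-(i:ℤ)))
    (sub_pos.2 hm1)
  rwa [add_sub_cancel] at h

theorem leftInvOn_chanT_chanInvBranch (i : ℕ) :
    LeftInvOn (chanT m) (chanInvBranch m i) (Ico 0 1) := fun y hy => by
  have hm1 : (1:ℝ) < m := Nat.one_lt_cast.2 hm
  have hu : 0 < 1 + ((m:ℝ) - 1) * y := by nlinarith [hy.1]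
  rw [chanT_of_mem_chanBranch hm (image_chanInvBranch_Ico hm i ▸ mem_image_of_mem _ hy),
    chanInvBranch, div_div_cancel₀ (zpow_pos (by positivity) _).ne', add_sub_cancel_left,
    mul_div_cancel_left₀ _ (sub_pos.2 hm1).ne']

theorem image_chanInvBranch_inter (i : ℕ) (A : Set ℝ) :
    chanInvBranch m i '' (A ∩ Ico 0 1) = chanT m ⁻¹' A ∩ chanBranch m i := by
  rw [(leftInvOn_chanT_chanInvBranch hm i).image_inter', image_chanInvBranch_Ico hm]

theorem iUnion_image_chanInvBranch_inter (A : Set ℝ) :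
    ⋃ i, chanInvBranch m i '' (A ∩ Ico 0 1) = chanT m ⁻¹' A ∩ Ioc 0 1 := by
  simp_rw [image_chanInvBranch_inter hm, ← inter_iUnion, iUnion_chanBranch hm]

theorem pairwise_disjoint_image_chanInvBranch_inter (A : Set ℝ) :
    Pairwise (Disjoint on fun i => chanInvBranch m i '' (A ∩ Ico 0 1)) := fun i j hij => by
  simp only [onFun, image_chanInvBranch_inter hm]
  exact (pairwise_disjoint_chanBranch hm hij).mono inter_subset_right inter_subset_right

theorem injOn_chanInvBranch (i : ℕ) : InjOn (chanInvBranch m i) (Ico 0 1) :=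
  ((strictAntiOn_div_one_add_mul (zpow_pos (by positivity) _)
    (sub_pos.2 (Nat.one_lt_cast.2 hm))).injOn).mono Ico_subset_Ici_self

theorem hasDerivAt_chanInvBranch (i : ℕ) {y : ℝ} (hy : 0 ≤ y) :
    HasDerivAt (chanInvBranch m i) (chanInvBranchDeriv m i y) y := by
  have hm1 : (1:ℝ) < m := Nat.one_lt_cast.2 hm
  exact hasDerivAt_div_one_add_mul _ _ (by nlinarith)

theorem abs_deriv_mul_chanDensity_chanInvBranch (i : ℕ) {y : ℝ} (hy : 0 ≤ y) :
    |chanInvBranchDeriv m i y| * chanDensity m (chanInvBranch m i y) =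
      chanDensity m y * chanP m i (((m:ℝ) - 1) * y) := by
  have hm1 : (1:ℝ) < m := Nat.one_lt_cast.2 hm
  have hpow : (m:ℝ) ^ (-((i:ℤ) + 1)) = (m:ℝ) ^ (-(i:ℤ)) / m := by
    rw [neg_add, zpow_add₀ (by positivity), zpow_neg_one, div_eq_mul_inv]
  unfold chanInvBranchDeriv chanDensity chanInvBranch chanP
  rw [hpow]
  generalize ((m:ℝ) - 1) ^ 2 / Real.log ((m:ℝ) ^ 2 / (2 * (m:ℝ) - 1)) = c
  have ha : (0:ℝ) < (m:ℝ) ^ (-(i:ℤ)) := zpow_pos (by positivity) _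
  generalize (m:ℝ) ^ (-(i:ℤ)) = a at ha ⊢
  have hr : 0 < (m:ℝ) - 1 := by linarith
  have hry : 0 ≤ ((m:ℝ) - 1) * y := by positivity
  have hra : 0 < ((m:ℝ) - 1) * a := by positivity
  have hram : 0 < ((m:ℝ) - 1) * (a / m) := by positivity
  have hu : 0 < 1 + ((m:ℝ) - 1) * y := by linarith
  rw [abs_div, abs_neg, abs_of_pos (by positivity), abs_of_pos (by positivity)]
  field_simp
  ring

end Chan

theorem chan_perron_frobenius_identity (m : ℕ) (hm : 2 ≤ m) (f : ℝ → ℝ)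
    (hf : Integrable f (chanGamma m)) (A : Set ℝ) (hA : MeasurableSet A) :
    ∫ x in chanT m ⁻¹' A, f x ∂(chanGamma m) =
      ∫ y in A,
        (∑' i : ℕ, chanP m i (((m:ℝ) - 1) * y) * f ((m:ℝ)^(-(i:ℤ)) / (1 + ((m:ℝ) - 1) * y)))
        ∂(chanGamma m) := by
  have hm : 1 < m := hm
  have hs : MeasurableSet (A ∩ Ico 0 1) := hA.inter measurableSet_Ico
  have hunion := iUnion_image_chanInvBranch_inter hm A
  have hint : IntegrableOn (fun x => chanDensity m x * f x)
      (⋃ i, chanInvBranch m i '' (A ∩ Ico 0 1)) :=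
    (integrableOn_chanDensity_mul hf).mono_set
      (hunion ▸ inter_subset_right.trans Ioc_subset_Icc_self)
  calc ∫ x in chanT m ⁻¹' A, f x ∂chanGamma m
      = ∫ x in ⋃ i, chanInvBranch m i '' (A ∩ Ico 0 1), chanDensity m x * f x := by
        rw [setIntegral_chanGamma, hunion]
        exact setIntegral_congr_set (ae_eq_set_inter (ae_eq_refl _) Ioc_ae_eq_Icc.symm)
    _ = ∫ y in A ∩ Ico 0 1, ∑' i, |chanInvBranchDeriv m i y| •
          (chanDensity m (chanInvBranch m i y) * f (chanInvBranch m i y)) :=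
        integral_iUnion_image_eq_integral_tsum hs
          (fun i y hy => (hasDerivAt_chanInvBranch hm i hy.2.1).hasDerivWithinAt)
          (fun i => (injOn_chanInvBranch hm i).mono inter_subset_right)
          (pairwise_disjoint_image_chanInvBranch_inter hm A) hint
    _ = ∫ y in A ∩ Ico 0 1, chanDensity m y *
          ∑' i, chanP m i (((m:ℝ) - 1) * y) * f (chanInvBranch m i y) := by
        refine setIntegral_congr_fun hs fun y hy => ?_
        simp_rw [smul_eq_mul, ← mul_assoc, abs_deriv_mul_chanDensity_chanInvBranch hm _ hy.2.1,
          mul_assoc, tsum_mul_left]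
    _ = _ := by
        rw [setIntegral_chanGamma]
        exact setIntegral_congr_set (ae_eq_set_inter (ae_eq_refl _) Ico_ae_eq_Icc)
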